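/- Let n be an integer with 4 ≤ n ≤ 9 and let μ ∈ (0, 1) and ω > 0 be real. Then every complex root λ of Q_j satisfies Re λ = 0 for all j ∈ {0, 1, …, n−1} if and only if μ ≥ 4/(n−1)². That is, the regular n-gon relative equilibrium with central mass is linearly stable if and only if μ ∈ [4/(n−1)², 1). -/
import Mathlib


open Real Finset

/-- `F_j = ω²·(12 − μ(n−1)(n−5) + μ(n² − 6nj + 6j² − 1)) / (6(2 + μ(n−1)))`. -/
noncomputable def Fcoef (n j : ℕ) (μ ω : ℝ) : ℝ :=
  ω ^ 2 * (12 - μ * ((n : ℝ) - 1) * ((n : ℝ) - 5)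
      + μ * ((n : ℝ) ^ 2 - 6 * n * j + 6 * (j : ℝ) ^ 2 - 1))
    / (6 * (2 + μ * ((n : ℝ) - 1)))

/-- `ε_j = 2μnω²/(2 + μ(n−1))` if `j = 1`, else `0`. -/
noncomputable def eps (n j : ℕ) (μ ω : ℝ) : ℝ :=
  if j = 1 then 2 * μ * n * ω ^ 2 / (2 + μ * ((n : ℝ) - 1)) else 0

/-- `ε'_j = 2μnω²/(2 + μ(n−1))` if `j = n−1`, else `0`. -/
noncomputable def eps' (n j : ℕ) (μ ω : ℝ) : ℝ :=
  if j = n - 1 then 2 * μ * n * ω ^ 2 / (2 + μ * ((n : ℝ) - 1)) else 0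

/-- The stability quartic `Q_j(λ) = λ⁴ + 2ω²λ² + ω⁴ − (F_j + ε_j)(F_j + ε'_j)`. -/
noncomputable def Q (n j : ℕ) (μ ω : ℝ) (lam : ℂ) : ℂ :=
  lam ^ 4 + 2 * (ω : ℂ) ^ 2 * lam ^ 2 + (ω : ℂ) ^ 4
    - ((Fcoef n j μ ω + eps n j μ ω : ℝ) : ℂ)
      * ((Fcoef n j μ ω + eps' n j μ ω : ℝ) : ℂ)

lemma key_real (ω P u v : ℝ) (hω : 0 < ω) (h0 : 0 ≤ P) (h1 : P ≤ ω ^ 4)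
    (hr : (u * u - v * v + ω ^ 2) * (u * u - v * v + ω ^ 2)
        - (u * v + v * u) * (u * v + v * u) = P)
    (hi : (u * u - v * v + ω ^ 2) * (u * v + v * u)
        + (u * v + v * u) * (u * u - v * v + ω ^ 2) = 0) : u = 0 := by
  have hiz : (u * u - v * v + ω ^ 2) * (u * v) = 0 := by nlinarith [hi]
  rcases mul_eq_zero.mp hiz with hA | hB
  · have hbz : u * v = 0 := by nlinarith [hr, hA, h0, sq_nonneg (u * v)]
    rcases mul_eq_zero.mp hbz with h | h
    · exact h
    · exfalso; rw [h] at hA; nlinarith [sq_nonneg u, hω]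
  · rcases mul_eq_zero.mp hB with h | h
    · exact h
    · by_contra hu0
      have hupos : 0 < u ^ 2 := by positivity
      rw [h] at hr
      nlinarith [hr, h1, pow_pos hω 2, hupos]

lemma key_bwd (ω : ℝ) (hω : 0 < ω) (P : ℝ) (h0 : 0 ≤ P) (h1 : P ≤ ω ^ 4) (lam : ℂ)
    (hl : lam ^ 4 + 2 * (ω : ℂ) ^ 2 * lam ^ 2 + (ω : ℂ) ^ 4 - (P : ℂ) = 0) : lam.re = 0 := by
  have h2 : (lam ^ 2 + (ω : ℂ) ^ 2) ^ 2 = (P : ℂ) := by linear_combination hl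
  rw [Complex.ext_iff] at h2
  obtain ⟨hr, hi⟩ := h2
  rw [sq, Complex.mul_re] at hr
  rw [sq, Complex.mul_im] at hi
  have hzre : (lam ^ 2 + (ω : ℂ) ^ 2).re = lam.re * lam.re - lam.im * lam.im + ω ^ 2 := by
    simp [sq, Complex.mul_re]
  have hzim : (lam ^ 2 + (ω : ℂ) ^ 2).im = lam.re * lam.im + lam.im * lam.re := by
    simp [sq, Complex.mul_im]
  rw [hzre, hzim] at hr hi
  simp only [Complex.ofReal_re, Complex.ofReal_im] at hr hi
  exact key_real ω P lam.re lam.im hω h0 h1 (by linarith [hr]) (by linarith [hi])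

lemma key_fwd (ω : ℝ) (hω : 0 < ω) (P : ℝ)
    (h : ∀ lam : ℂ, lam ^ 4 + 2 * (ω : ℂ) ^ 2 * lam ^ 2 + (ω : ℂ) ^ 4 - (P : ℂ) = 0 → lam.re = 0) :
    0 ≤ P ∧ P ≤ ω ^ 4 := by
  constructor
  · by_contra hP
    push_neg at hP
    set s := Real.sqrt (-P) with hs_def
    have hs : 0 < s := Real.sqrt_pos.mpr (by linarith)
    have hs2 : s ^ 2 = -P := Real.sq_sqrt (by linarith)
    obtain ⟨z, hz⟩ := IsAlgClosed.exists_pow_nat_eq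
      (k := ℂ) (-(ω : ℂ) ^ 2 + (s : ℂ) * Complex.I) (n := 2) (by norm_num)
    have hroot : z ^ 4 + 2 * (ω : ℂ) ^ 2 * z ^ 2 + (ω : ℂ) ^ 4 - (P : ℂ) = 0 := by
      have e1 : z ^ 4 + 2 * (ω : ℂ) ^ 2 * z ^ 2 + (ω : ℂ) ^ 4 = (z ^ 2 + (ω : ℂ) ^ 2) ^ 2 := by
        ring
      rw [e1, hz]
      have e2 : (-(ω : ℂ) ^ 2 + (s : ℂ) * Complex.I + (ω : ℂ) ^ 2) ^ 2
          = ((s : ℂ)) ^ 2 * Complex.I ^ 2 := by ring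
      rw [e2, Complex.I_sq]
      have e3 : ((s : ℝ) : ℂ) ^ 2 = ((-P : ℝ) : ℂ) := by exact_mod_cast congrArg Complex.ofReal hs2
      rw [e3]
      push_cast
      ring
    have hre := h z hroot
    have him : (z ^ 2).im = s := by rw [hz]; simp [← Complex.ofReal_pow]
    rw [sq, Complex.mul_im, hre] at him
    simp at him
    linarith
  · by_contra hP
    push_neg at hP
    have hP0 : 0 < P := lt_trans (by positivity) hP
    have hsq : ω ^ 2 < Real.sqrt P := by
      have h1 : Real.sqrt (ω ^ 4) < Real.sqrt P := Real.sqrt_lt_sqrt (by positivity) hP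
      rwa [show ω ^ 4 = (ω ^ 2) ^ 2 by ring, Real.sqrt_sq (by positivity)] at h1
    set t := Real.sqrt (Real.sqrt P - ω ^ 2) with ht_def
    have ht : 0 < t := Real.sqrt_pos.mpr (by linarith)
    have ht2 : t ^ 2 = Real.sqrt P - ω ^ 2 := Real.sq_sqrt (by linarith)
    have hsp : (Real.sqrt P) ^ 2 = P := Real.sq_sqrt (by linarith)
    have h1 : t ^ 4 + 2 * ω ^ 2 * t ^ 2 + ω ^ 4 - P = 0 := by nlinarith [ht2, hsp]
    have hroot : (t : ℂ) ^ 4 + 2 * (ω : ℂ) ^ 2 * (t : ℂ) ^ 2 + (ω : ℂ) ^ 4 - (P : ℂ) = 0 := by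
      exact_mod_cast congrArg Complex.ofReal h1
    have := h t hroot
    simp at this
    linarith

lemma Fcoef_eq (n j : ℕ) (μ ω : ℝ) (hA : 2 + μ * ((n : ℝ) - 1) ≠ 0) :
    Fcoef n j μ ω
      = ω ^ 2 * (2 + μ * (((n : ℝ) - 1) - (j : ℝ) * ((n : ℝ) - (j : ℝ))))
        / (2 + μ * ((n : ℝ) - 1)) := by
  unfold Fcoef
  field_simp
  ring

lemma natb {n j : ℕ} (hn1 : 4 ≤ n) (hn2 : n ≤ 9) (hj : j < n) :
    j * (n - j) ≤ 2 * (n - 1) + 4 := by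
  interval_cases n <;> interval_cases j <;> norm_num

/-- For `4 ≤ n ≤ 9`: the regular `n`-gon with central mass is linearly stable
iff `μ ≥ 4/(n−1)²`. -/
theorem ngon_stable_iff_small (n : ℕ) (hn1 : 4 ≤ n) (hn2 : n ≤ 9)
    (μ ω : ℝ) (hμ : μ ∈ Set.Ioo (0 : ℝ) 1) (hω : 0 < ω) :
    (∀ j < n, ∀ lam : ℂ, Q n j μ ω lam = 0 → lam.re = 0)
      ↔ 4 / ((n : ℝ) - 1) ^ 2 ≤ μ := by
  obtain ⟨hμ0, hμ1⟩ := hμ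
  have hx4 : (4 : ℝ) ≤ (n : ℝ) := by exact_mod_cast hn1
  have hA : (0 : ℝ) < 2 + μ * ((n : ℝ) - 1) := by nlinarith
  have hAne : 2 + μ * ((n : ℝ) - 1) ≠ 0 := ne_of_gt hA
  have hx1 : (0 : ℝ) < ((n : ℝ) - 1) ^ 2 := by nlinarith
  have hw4 : (0 : ℝ) < ω ^ 4 := by positivity
  have hQeq : ∀ (j : ℕ) (lam : ℂ), Q n j μ ω lam
      = lam ^ 4 + 2 * (ω : ℂ) ^ 2 * lam ^ 2 + (ω : ℂ) ^ 4
        - ((((Fcoef n j μ ω + eps n j μ ω) * (Fcoef n j μ ω + eps' n j μ ω)) : ℝ) : ℂ) := by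
    intro j lam; unfold Q; push_cast; ring
  have hF1 : Fcoef n 1 μ ω = ω ^ 2 * 2 / (2 + μ * ((n : ℝ) - 1)) := by
    rw [Fcoef_eq n 1 μ ω hAne]; push_cast; ring
  have he1 : eps n 1 μ ω = 2 * μ * n * ω ^ 2 / (2 + μ * ((n : ℝ) - 1)) := by
    unfold eps; rw [if_pos rfl]
  have he1' : eps' n 1 μ ω = 0 := by
    unfold eps'; rw [if_neg (by omega)]
  have hP1 : (Fcoef n 1 μ ω + eps n 1 μ ω) * (Fcoef n 1 μ ω + eps' n 1 μ ω)
      = ω ^ 4 * (4 + 4 * μ * (n : ℝ)) / (2 + μ * ((n : ℝ) - 1)) ^ 2 := by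
    rw [hF1, he1, he1']; field_simp; ring
  constructor
  · intro h
    obtain ⟨-, h2⟩ := key_fwd ω hω _ (fun lam hl => h 1 (by omega) lam (by rw [hQeq]; exact hl))
    rw [hP1, div_le_iff₀ (by positivity)] at h2
    have h4 : μ * 4 ≤ μ * (μ * ((n : ℝ) - 1) ^ 2) := by nlinarith [h2, hw4]
    have h5 := le_of_mul_le_mul_left h4 hμ0
    rw [div_le_iff₀ hx1]
    linarith
  · intro hm j hj lam hl
    have hm4 : 4 ≤ μ * ((n : ℝ) - 1) ^ 2 := by rw [div_le_iff₀ hx1] at hm; linarith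
    rw [hQeq] at hl
    have hcd : 4 + 4 * μ * (n : ℝ) ≤ (2 + μ * ((n : ℝ) - 1)) ^ 2 := by
      nlinarith [mul_le_mul_of_nonneg_left hm4 hμ0.le]
    have hbig : ω ^ 4 * (4 + 4 * μ * (n : ℝ)) / (2 + μ * ((n : ℝ) - 1)) ^ 2 ≤ ω ^ 4 := by
      rw [div_le_iff₀ (by positivity)]
      nlinarith [mul_le_mul_of_nonneg_left hcd hw4.le]
    have hnn : 0 ≤ ω ^ 4 * (4 + 4 * μ * (n : ℝ)) / (2 + μ * ((n : ℝ) - 1)) ^ 2 := by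
      apply div_nonneg _ (by positivity)
      nlinarith
    by_cases hj1 : j = 1
    · subst hj1
      rw [hP1] at hl
      exact key_bwd ω hω _ hnn hbig lam hl
    · by_cases hjn : j = n - 1
      · subst hjn
        have hc : ((n - 1 : ℕ) : ℝ) = (n : ℝ) - 1 := by
          push_cast [Nat.cast_sub (by omega : 1 ≤ n)]; ring
        have hFn : Fcoef n (n - 1) μ ω = ω ^ 2 * 2 / (2 + μ * ((n : ℝ) - 1)) := by
          rw [Fcoef_eq n (n - 1) μ ω hAne, hc]; ring
        have hen : eps n (n - 1) μ ω = 0 := by unfold eps; rw [if_neg (by omega)]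
        have hen' : eps' n (n - 1) μ ω = 2 * μ * n * ω ^ 2 / (2 + μ * ((n : ℝ) - 1)) := by
          unfold eps'; rw [if_pos rfl]
        have hPn : (Fcoef n (n - 1) μ ω + eps n (n - 1) μ ω)
            * (Fcoef n (n - 1) μ ω + eps' n (n - 1) μ ω)
            = ω ^ 4 * (4 + 4 * μ * (n : ℝ)) / (2 + μ * ((n : ℝ) - 1)) ^ 2 := by
          rw [hFn, hen, hen']; field_simp; ring
        exact key_bwd ω hω _ (hPn ▸ hnn) (hPn ▸ hbig) lam hl
      · have he : eps n j μ ω = 0 := by unfold eps; rw [if_neg hj1]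
        have he' : eps' n j μ ω = 0 := by unfold eps'; rw [if_neg hjn]
        have hF := Fcoef_eq n j μ ω hAne
        have hjx : (j : ℝ) ≤ (n : ℝ) := by exact_mod_cast hj.le
        have hb : (j : ℝ) * ((n : ℝ) - (j : ℝ)) ≤ 2 * ((n : ℝ) - 1) + 4 := by
          have h1 : ((j * (n - j) : ℕ) : ℝ) ≤ ((2 * (n - 1) + 4 : ℕ) : ℝ) := by
            exact_mod_cast natb hn1 hn2 hj
          have h2 : ((j * (n - j) : ℕ) : ℝ) = (j : ℝ) * ((n : ℝ) - (j : ℝ)) := by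
            push_cast [Nat.cast_sub hj.le]; ring
          have h3 : ((2 * (n - 1) + 4 : ℕ) : ℝ) = 2 * ((n : ℝ) - 1) + 4 := by
            push_cast [Nat.cast_sub (by omega : 1 ≤ n)]; ring
          rw [h2, h3] at h1; exact h1
        have hb0 : 0 ≤ (j : ℝ) * ((n : ℝ) - (j : ℝ)) :=
          mul_nonneg (Nat.cast_nonneg j) (by linarith)
        obtain ⟨p, hp⟩ : ∃ p : ℝ, p = 2 + μ * (((n : ℝ) - 1) - (j : ℝ) * ((n : ℝ) - (j : ℝ))) :=
          ⟨_, rfl⟩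
        have hpA : p ≤ 2 + μ * ((n : ℝ) - 1) := by
          rw [hp]; linarith [mul_nonneg hμ0.le hb0]
        have hpA' : -(2 + μ * ((n : ℝ) - 1)) ≤ p := by
          rw [hp]; linarith [mul_le_mul_of_nonneg_left hb hμ0.le]
        have hpp : p * p ≤ (2 + μ * ((n : ℝ) - 1)) ^ 2 := by
          have h9 := mul_nonneg (sub_nonneg.mpr hpA)
            (by linarith : (0:ℝ) ≤ (2 + μ * ((n : ℝ) - 1)) + p)
          linarith [h9]
        have hPj : (Fcoef n j μ ω + eps n j μ ω) * (Fcoef n j μ ω + eps' n j μ ω)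
            = ω ^ 4 * (p * p) / (2 + μ * ((n : ℝ) - 1)) ^ 2 := by
          rw [hF, he, he', ← hp]; field_simp; ring
        have hnn2 : 0 ≤ ω ^ 4 * (p * p) / (2 + μ * ((n : ℝ) - 1)) ^ 2 :=
          div_nonneg (mul_nonneg hw4.le (mul_self_nonneg p)) (pow_pos hA 2).le
        have hbig2 : ω ^ 4 * (p * p) / (2 + μ * ((n : ℝ) - 1)) ^ 2 ≤ ω ^ 4 := by
          rw [div_le_iff₀ (pow_pos hA 2)]
          exact mul_le_mul_of_nonneg_left hpp hw4.le
        exact key_bwd ω hω _ (hPj ▸ hnn2) (hPj ▸ hbig2) lam hl
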